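/- arXiv:1909.06600 — 8 statements merged into one kernel-verified Lean document; each statement's English description precedes it below -/
import Mathlib

section
/- Let Γ_S > 0 and 0 ≤ Γ_D < 1 + 1/Γ_S. Then for every power allocation ratio a ∈ [0,1], Γ̃_D(a) ≤ Γ̃_U(a), and consequently the instantaneous secrecy rate C(a) = 0 for all a ∈ [0,1] (the source should remain idle when the condition Γ_D > 1 + 1/Γ_S fails). -/
/-- SINR at the untrusted UAV with power allocation ratio `a`. -/
noncomputable def sinrU (S a : ℝ) : ℝ := a * S / ((1 - a) * S + 1)

/-- SINR at the destination with power allocation ratio `a`. -/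
noncomputable def sinrD (S D a : ℝ) : ℝ := a * S * D / (S + D + 1)

/-- Instantaneous secrecy rate. -/
noncomputable def secrecyRate (S D a : ℝ) : ℝ :=
  max 0 (Real.log (1 + sinrD S D a) - Real.log (1 + sinrU S a))

theorem stmt_0 (S D : ℝ) (hS : 0 < S) (hD0 : 0 ≤ D) (hD : D < 1 + 1 / S) :
    ∀ a ∈ Set.Icc (0 : ℝ) 1, sinrD S D a ≤ sinrU S a ∧ secrecyRate S D a = 0 := by
  intro a ha
  obtain ⟨ha0, ha1⟩ := ha
  have hdenU : 0 < (1 - a) * S + 1 := by nlinarith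
  have hdenD : 0 < S + D + 1 := by linarith
  have hDS : D * S < S + 1 := by
    have h1 : D * S < (1 + 1 / S) * S := by
      exact mul_lt_mul_of_pos_right hD hS
    have h2 : (1 + 1 / S) * S = S + 1 := by field_simp
    linarith
  have hkey : a * S * D * ((1 - a) * S + 1) ≤ a * S * (S + D + 1) := by
    nlinarith [mul_nonneg (mul_nonneg ha0 hS.le) (sub_pos.2 hDS).le,
      mul_nonneg (mul_nonneg (mul_nonneg ha0 ha0) (mul_nonneg hS.le hS.le)) hD0]
  have hle : sinrD S D a ≤ sinrU S a := by
    rw [sinrD, sinrU, div_le_div_iff₀ hdenD hdenU]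
    linarith
  have hDpos : 0 ≤ sinrD S D a := by
    apply div_nonneg _ hdenD.le
    positivity
  refine ⟨hle, ?_⟩
  rw [secrecyRate, max_eq_left]
  have := Real.log_le_log (by linarith : (0:ℝ) < 1 + sinrD S D a) (by linarith : 1 + sinrD S D a ≤ 1 + sinrU S a)
  linarith
end

section
/- Let Γ_S > 0 and Γ_D > 1 + 1/Γ_S. Then the optimal power allocation ratio a* = (1/2)(1 − (1+Γ_S)/(Γ_S Γ_D)) satisfies 0 < a* < 1/2, and for every a ∈ [0,1] one has (1+Γ̃_D(a))/(1+Γ̃_U(a)) ≤ (1+Γ̃_D(a*))/(1+Γ̃_U(a*)); in particular a* maximizes the instantaneous secrecy rate C(a) over a ∈ [0,1]. -/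
/-- The optimal power allocation ratio. -/
noncomputable def aStar (S D : ℝ) : ℝ := (1 / 2) * (1 - (1 + S) / (S * D))

/-!
Clearing denominators, `(1 + Γ̃_D(a)) / (1 + Γ̃_U(a))` is a positive constant times
`(S + D + 1 + a S D) ((1 - a) S + 1)`, a concave quadratic in `a` with leading coefficient
`-S² D` whose vertex is `a*`. Hence it equals its value at `a*` minus `S² D (a - a*)²`, and the
secrecy rate, being `max 0 (log ratio)`, is maximized at `a*` as well.
-/

section

variable {S D a : ℝ}

lemma one_add_sinrU_eq (h : (1 - a) * S + 1 ≠ 0) :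
    1 + sinrU S a = (S + 1) / ((1 - a) * S + 1) := by
  unfold sinrU
  rw [eq_div_iff h, add_mul, div_mul_cancel₀ _ h]
  ring

lemma one_add_sinrD_eq (h : S + D + 1 ≠ 0) :
    1 + sinrD S D a = (S + D + 1 + a * S * D) / (S + D + 1) := by
  unfold sinrD
  field_simp

lemma sinrU_nonneg (hS : 0 ≤ S) (ha : a ∈ Set.Icc (0 : ℝ) 1) : 0 ≤ sinrU S a := by
  obtain ⟨ha0, ha1⟩ := ha
  have h1a : 0 ≤ 1 - a := by linarith
  unfold sinrU
  positivity

lemma sinrD_nonneg (hS : 0 ≤ S) (hD : 0 ≤ D) (ha : 0 ≤ a) : 0 ≤ sinrD S D a := by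
  unfold sinrD
  positivity

lemma aStar_eq (hS : S ≠ 0) (hD : D ≠ 0) :
    aStar S D = (S * D - S - 1) / (2 * (S * D)) := by
  unfold aStar
  field_simp
  ring

lemma aStar_pos (hS : 0 < S) (hD : 1 + 1 / S < D) : 0 < aStar S D := by
  have hD0 : 0 < D := lt_trans (by positivity) hD
  have hSD : S + 1 < S * D := by
    calc S + 1 = S * (1 + 1 / S) := by field_simp
      _ < S * D := mul_lt_mul_of_pos_left hD hS
  rw [aStar_eq hS.ne' hD0.ne']
  exact div_pos (by linarith) (by positivity)

lemma aStar_lt_half (hS : 0 < S) (hD : 0 < D) : aStar S D < 1 / 2 := by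
  unfold aStar
  have : 0 < (1 + S) / (S * D) := by positivity
  linarith

lemma ratio_eq (hS : 0 ≤ S) (hD : 0 ≤ D) (ha : 0 < (1 - a) * S + 1) :
    (1 + sinrD S D a) / (1 + sinrU S a)
      = (S + D + 1 + a * S * D) * ((1 - a) * S + 1) / ((S + D + 1) * (S + 1)) := by
  rw [one_add_sinrU_eq ha.ne', one_add_sinrD_eq (by positivity), div_div_div_eq]

lemma ratio_numerator_eq (hS : S ≠ 0) (hD : D ≠ 0) (a : ℝ) :
    (S + D + 1 + a * S * D) * ((1 - a) * S + 1)
      = (S + D + 1 + aStar S D * S * D) * ((1 - aStar S D) * S + 1)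
        - S ^ 2 * D * (a - aStar S D) ^ 2 := by
  rw [aStar_eq hS hD]
  field_simp
  ring

theorem ratio_le_ratio_aStar (hS : 0 < S) (hD : 0 < D) (ha : 0 < (1 - a) * S + 1) :
    (1 + sinrD S D a) / (1 + sinrU S a)
      ≤ (1 + sinrD S D (aStar S D)) / (1 + sinrU S (aStar S D)) := by
  have hStar : 0 < (1 - aStar S D) * S + 1 := by
    nlinarith [aStar_lt_half hS hD]
  rw [ratio_eq hS.le hD.le ha, ratio_eq hS.le hD.le hStar]
  refine div_le_div_of_nonneg_right ?_ (by positivity)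
  rw [ratio_numerator_eq hS.ne' hD.ne' a]
  have : 0 ≤ S ^ 2 * D * (a - aStar S D) ^ 2 := by positivity
  linarith

lemma secrecyRate_eq_max_log_ratio (hU : 0 ≤ sinrU S a) (hD : 0 ≤ sinrD S D a) :
    secrecyRate S D a = max 0 (Real.log ((1 + sinrD S D a) / (1 + sinrU S a))) := by
  rw [secrecyRate, Real.log_div (by linarith) (by linarith)]

end

theorem stmt_1 (S D : ℝ) (hS : 0 < S) (hD : 1 + 1 / S < D) :
    0 < aStar S D ∧ aStar S D < 1 / 2 ∧
    (∀ a ∈ Set.Icc (0 : ℝ) 1,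
      (1 + sinrD S D a) / (1 + sinrU S a)
        ≤ (1 + sinrD S D (aStar S D)) / (1 + sinrU S (aStar S D))) ∧
    (∀ a ∈ Set.Icc (0 : ℝ) 1, secrecyRate S D a ≤ secrecyRate S D (aStar S D)) := by
  have hD0 : 0 < D := lt_trans (by positivity) hD
  have hStar_pos := aStar_pos hS hD
  have hStar_half := aStar_lt_half hS hD0
  have hStar_mem : aStar S D ∈ Set.Icc (0 : ℝ) 1 := ⟨hStar_pos.le, by linarith⟩
  have ratio_le : ∀ a ∈ Set.Icc (0 : ℝ) 1,
      (1 + sinrD S D a) / (1 + sinrU S a)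
        ≤ (1 + sinrD S D (aStar S D)) / (1 + sinrU S (aStar S D)) := fun a ha =>
    ratio_le_ratio_aStar hS hD0 (by nlinarith [ha.2])
  refine ⟨hStar_pos, hStar_half, ratio_le, fun a ha => ?_⟩
  have hUa := sinrU_nonneg hS.le ha
  have hDa := sinrD_nonneg hS.le hD0.le ha.1
  rw [secrecyRate_eq_max_log_ratio hUa hDa,
    secrecyRate_eq_max_log_ratio (sinrU_nonneg hS.le hStar_mem)
      (sinrD_nonneg hS.le hD0.le hStar_pos.le)]
  exact max_le_max le_rfl (Real.log_le_log (by positivity) (ratio_le a ha))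
end

section
/- Let Γ_S > 0 and Γ_D > 1 + 1/Γ_S, and let a* = (1/2)(1 − (1+Γ_S)/(Γ_S Γ_D)). Then Γ̃_U(a*) = (Γ_S(Γ_D−1)−1)/((Γ_S+2)Γ_D + Γ_S + 1) and Γ̃_D(a*) = (Γ_S(Γ_D−1)−1)/(2(Γ_D + Γ_S + 1)). -/
theorem stmt_2 (S D : ℝ) (hS : 0 < S) (hD : 1 + 1 / S < D) :
    sinrU S (aStar S D) = (S * (D - 1) - 1) / ((S + 2) * D + S + 1) ∧
    sinrD S D (aStar S D) = (S * (D - 1) - 1) / (2 * (D + S + 1)) := by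
  have hD0 : 0 < D := lt_trans (by positivity) hD
  have hS' : S ≠ 0 := ne_of_gt hS
  have hD' : D ≠ 0 := ne_of_gt hD0
  have h1 : (1 - aStar S D) * S + 1 ≠ 0 := by
    have : 0 < (1 - aStar S D) * S + 1 := by
      have ha : aStar S D < 1 := by
        unfold aStar
        nlinarith [div_pos (by positivity : (0:ℝ) < 1 + S) (by positivity : (0:ℝ) < S * D)]
      nlinarith
    exact ne_of_gt this
  have h2 : S + D + 1 ≠ 0 := by positivity
  have h3 : (S + 2) * D + S + 1 ≠ 0 := by positivity
  have h4 : 2 * (D + S + 1) ≠ 0 := by positivity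
  constructor
  · unfold sinrU aStar
    unfold aStar at h1
    field_simp at h1 ⊢
    ring_nf
    ring_nf at h1
    field_simp
    nlinarith [h1, sq_nonneg S, sq_nonneg D]
  · unfold sinrD aStar
    field_simp
    ring
end

section
/- Let Γ_S > 0 and Γ_D > 1 + 1/Γ_S. Then the SINR at the untrusted UAV under the optimal power allocation satisfies Γ̃_U(a*) = (Γ_S(Γ_D−1)−1)/((Γ_S+2)Γ_D + Γ_S + 1) < 1; i.e., the achievable rate at the eavesdropping UAV is bounded above by ln 2. -/
theorem stmt_3 (S D : ℝ) (hS : 0 < S) (hD : 1 + 1 / S < D) :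
    (S * (D - 1) - 1) / ((S + 2) * D + S + 1) < 1 ∧
    Real.log (1 + (S * (D - 1) - 1) / ((S + 2) * D + S + 1)) < Real.log 2 := by
  have hD1 : 1 < D := lt_trans (by nlinarith [one_div_pos.mpr hS]) hD
  have hden : 0 < (S + 2) * D + S + 1 := by nlinarith
  have h1 : (S * (D - 1) - 1) / ((S + 2) * D + S + 1) < 1 := by
    rw [div_lt_one hden]; nlinarith
  have h2 : -1 < (S * (D - 1) - 1) / ((S + 2) * D + S + 1) := by
    rw [neg_lt, ← neg_div, div_lt_one hden]; nlinarith
  refine ⟨h1, Real.log_lt_log (by linarith) (by linarith)⟩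
end

section
/- Let Γ_S > 0 and Γ_D > 1 + 1/Γ_S, and write γ_U = Γ̃_U(a*) and γ_D = Γ̃_D(a*) for the SINRs under the optimal power allocation. Then γ_D/γ_U = γ_D + 1, and consequently the maximal instantaneous secrecy rate satisfies C(a*) = ln((1+γ_D)/(1+γ_U)) = ln(1 + γ_D²/(2γ_D + 1)). -/
theorem stmt_4 (S D : ℝ) (hS : 0 < S) (hD : 1 + 1 / S < D)
    (γU γD : ℝ) (hγU : γU = sinrU S (aStar S D)) (hγD : γD = sinrD S D (aStar S D)) :
    γD / γU = γD + 1 ∧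
    secrecyRate S D (aStar S D) = Real.log ((1 + γD) / (1 + γU)) ∧
    secrecyRate S D (aStar S D) = Real.log (1 + γD ^ 2 / (2 * γD + 1)) := by
  have hN : 0 < S * D - S - 1 := by
    have := (mul_lt_mul_iff_right₀ hS).mpr hD
    have hs : S * (1 + 1 / S) = S + 1 := by field_simp
    nlinarith
  have hD1 : 1 < D := by nlinarith
  have hden1 : 0 < (S + 2) * D + S + 1 := by nlinarith
  have hden2 : 0 < 2 * (S + D + 1) := by nlinarith
  have hSD : S * D ≠ 0 := by positivity
  have hU : γU = (S * D - S - 1) / ((S + 2) * D + S + 1) := by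
    rw [hγU, sinrU, aStar]
    rw [div_eq_div_iff]
    · field_simp
      ring
    · have h : (1 - (1 / 2) * (1 - (1 + S) / (S * D))) * S + 1
        = ((S + 2) * D + S + 1) / (2 * D) := by field_simp; ring
      rw [h]
      positivity
    · exact ne_of_gt hden1
  have hDval : γD = (S * D - S - 1) / (2 * (S + D + 1)) := by
    rw [hγD, sinrD, aStar]
    rw [div_eq_div_iff (by positivity) (ne_of_gt hden2)]
    field_simp
    ring
  have hγUpos : 0 < γU := by rw [hU]; positivity
  have hγDpos : 0 < γD := by rw [hDval]; positivity
  have h1 : γD / γU = γD + 1 := by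
    rw [hU, hDval]
    rw [div_eq_iff (by positivity)]
    field_simp
    ring
  have hrel : γU = γD / (γD + 1) := by
    have : γD + 1 ≠ 0 := by positivity
    field_simp
    rw [← h1]
    field_simp
  have hle : γU ≤ γD := by
    rw [hrel]
    rw [div_le_iff₀ (by positivity)]
    nlinarith
  have hmax : secrecyRate S D (aStar S D)
      = Real.log (1 + γD) - Real.log (1 + γU) := by
    rw [secrecyRate, ← hγU, ← hγD, max_eq_right]
    have := Real.log_le_log (by linarith) (by linarith : 1 + γU ≤ 1 + γD)
    linarith
  have h2 : secrecyRate S D (aStar S D) = Real.log ((1 + γD) / (1 + γU)) := by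
    rw [hmax, Real.log_div (by linarith) (by linarith)]
  refine ⟨h1, h2, ?_⟩
  rw [h2]
  congr 1
  have h2g : (0:ℝ) < 2 * γD + 1 := by linarith
  rw [hrel]
  field_simp
  ring
end

section
/- Let m, n be positive integers and λ, μ > 0, and let X and Y be independent random variables with Gamma distributions of shape m, rate λ and shape n, rate μ respectively. Then Pr(Y < 1 + 1/X) = 1 − Σ_{k=0}^{n−1} (μ^k e^{−μ}/k!) ∫_0^∞ (1 + 1/t)^k (λ^m t^{m−1}/Γ(m)) e^{−μ/t − λt} dt. (This quantity is the secrecy outage probability SOP_i* of the link via UAV i under optimal power allocation.) -/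
/-!
Given `X = x > 0`, the event `1 + 1/X ≤ Y` has probability `P(Y ≥ c)` with `c = 1 + 1/x`. For
integer shape `n` this Gamma tail is the Poisson sum `e^{-μc} ∑_{k<n} (μc)^k / k!`: differentiating
it telescopes to minus the Gamma density. Each Poisson term is at most `1`, so integrating against
the Gamma(`m`, `λ`) density may be done term by term, and `e^{-μ(1 + 1/x)} = e^{-μ} e^{-μ/x}` turns
the `k`-th integral into the `k`-th summand. The outage event is the complement.
-/

open MeasureTheory ProbabilityTheory Real Set Filter Topology
open scoped Nat ENNReal

namespace ProbabilityTheory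

/-- `P(Poisson(r c) < n)`, which is also the survival function at `c` of the Gamma law with integer
shape `n` and rate `r`. -/
noncomputable def erlangSurvival (n : ℕ) (r c : ℝ) : ℝ :=
  exp (-(r * c)) * ∑ k ∈ Finset.range n, (r * c) ^ k / k !

lemma erlangSurvival_nonneg {n : ℕ} {r c : ℝ} (hr : 0 ≤ r) (hc : 0 ≤ c) :
    0 ≤ erlangSurvival n r c := by
  unfold erlangSurvival
  positivity

lemma hasDerivAt_erlangSurvival (n : ℕ) (r c : ℝ) :
    HasDerivAt (erlangSurvival (n + 1) r) (-(r ^ (n + 1) * c ^ n * exp (-(r * c)) / n !)) c := by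
  have hexp : HasDerivAt (fun c => exp (-(r * c))) (exp (-(r * c)) * -r) c := by
    simpa using ((hasDerivAt_id c).const_mul r).neg.exp
  induction n with
  | zero =>
    convert hexp using 1
    · ext; simp [erlangSurvival]
    · ring
  | succ n ih =>
    have hterm : HasDerivAt (fun c => (r * c) ^ (n + 1) / (n + 1)!)
        ((n + 1 : ℕ) * (r * c) ^ n * r / (n + 1)!) c := by
      simpa using (((hasDerivAt_id c).const_mul r).pow (n + 1)).div_const ((n + 1)! : ℝ)
    have hsplit : erlangSurvival (n + 2) r
        = fun c => erlangSurvival (n + 1) r c +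
            exp (-(r * c)) * ((r * c) ^ (n + 1) / (n + 1)!) := by
      ext c
      rw [erlangSurvival, Finset.sum_range_succ, mul_add, erlangSurvival]
    rw [hsplit]
    refine (ih.add (hexp.mul hterm)).congr_deriv ?_
    rw [Nat.factorial_succ]
    push_cast
    field_simp
    ring

lemma tendsto_erlangSurvival_atTop (n : ℕ) {r : ℝ} (hr : 0 < r) :
    Tendsto (erlangSurvival n r) atTop (𝓝 0) := by
  have hrc : Tendsto (fun c : ℝ => r * c) atTop atTop := tendsto_id.const_mul_atTop hr
  have hterms := tendsto_finsetSum (Finset.range n) fun k _ =>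
    ((Real.tendsto_pow_mul_exp_neg_atTop_nhds_zero k).comp hrc).div_const (k ! : ℝ)
  simp only [zero_div, Finset.sum_const_zero] at hterms
  refine hterms.congr fun c => ?_
  simp only [erlangSurvival, Finset.mul_sum, Function.comp_apply]
  exact Finset.sum_congr rfl fun k _ => by ring

lemma gammaPDFReal_natCast {m : ℕ} (hm : 0 < m) (r : ℝ) {x : ℝ} (hx : 0 ≤ x) :
    gammaPDFReal m r x = r ^ m * x ^ (m - 1) / Gamma m * exp (-(r * x)) := by
  rw [gammaPDFReal, if_pos hx, ← Nat.cast_pred hm, Real.rpow_natCast, Real.rpow_natCast]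
  ring

lemma integrable_gammaPDFReal {a r : ℝ} (ha : 0 < a) (hr : 0 < r) :
    Integrable (gammaPDFReal a r) := by
  refine ⟨(measurable_gammaPDFReal a r).aestronglyMeasurable, ?_⟩
  rw [hasFiniteIntegral_iff_ofReal (ae_of_all _ (gammaPDFReal_nonneg ha hr))]
  exact (lintegral_gammaPDF_eq_one ha hr).trans_lt ENNReal.one_lt_top

lemma gammaMeasure_natCast_Ici {n : ℕ} (hn : 0 < n) {r : ℝ} (hr : 0 < r) {c : ℝ} (hc : 0 ≤ c) :
    gammaMeasure n r (Ici c) = ENNReal.ofReal (erlangSurvival n r c) := by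
  obtain ⟨n, rfl⟩ : ∃ k, n = k + 1 := ⟨n - 1, (Nat.succ_pred_eq_of_pos hn).symm⟩
  have hpdf : ∀ x ∈ Ici c,
      gammaPDFReal (n + 1 : ℕ) r x = r ^ (n + 1) * x ^ n * exp (-(r * x)) / n ! := by
    intro x hx
    rw [gammaPDFReal_natCast (m := n + 1) (by omega) r (hc.trans hx), Nat.add_sub_cancel,
      Nat.cast_succ, Real.Gamma_nat_eq_factorial]
    ring
  have hderiv : ∀ x ∈ Ici c, HasDerivAt (fun x => -erlangSurvival (n + 1) r x)
      (gammaPDFReal (n + 1 : ℕ) r x) x := fun x hx => by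
    rw [hpdf x hx, ← neg_neg (_ / _)]
    exact (hasDerivAt_erlangSurvival n r x).neg
  have hnonneg : ∀ x ∈ Ioi c, 0 ≤ gammaPDFReal (n + 1 : ℕ) r x := fun x _ =>
    gammaPDFReal_nonneg (by positivity) hr x
  have hlim : Tendsto (fun x => -erlangSurvival (n + 1) r x) atTop (𝓝 0) := by
    simpa using (tendsto_erlangSurvival_atTop (n + 1) hr).neg
  calc gammaMeasure (n + 1 : ℕ) r (Ici c)
      = ∫⁻ x in Ioi c, ENNReal.ofReal (gammaPDFReal (n + 1 : ℕ) r x) := by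
        rw [gammaMeasure, withDensity_apply _ measurableSet_Ici, ← setLIntegral_congr Ioi_ae_eq_Ici]
        rfl
    _ = ENNReal.ofReal (∫ x in Ioi c, gammaPDFReal (n + 1 : ℕ) r x) :=
        (ofReal_integral_eq_lintegral_ofReal (integrableOn_Ioi_deriv_of_nonneg' hderiv hnonneg hlim)
          ((ae_restrict_iff' measurableSet_Ioi).mpr (ae_of_all _ hnonneg))).symm
    _ = ENNReal.ofReal (erlangSurvival (n + 1) r c) := by
        rw [integral_Ioi_of_hasDerivAt_of_nonneg' hderiv hnonneg hlim, zero_sub, neg_neg]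

lemma lintegral_gammaMeasure (a r : ℝ) {f : ℝ → ℝ≥0∞} (hf : Measurable f) :
    ∫⁻ x, f x ∂gammaMeasure a r = ∫⁻ x in Ioi 0, gammaPDF a r x * f x := by
  have hpdf : Measurable (gammaPDF a r) := (measurable_gammaPDFReal a r).ennreal_ofReal
  rw [gammaMeasure, lintegral_withDensity_eq_lintegral_mul _ hpdf hf,
    setLIntegral_congr Ioi_ae_eq_Ici, setLIntegral_eq_of_support_subset]
  · rfl
  · intro x hx
    by_contra hneg
    exact hx (by simp [gammaPDF_of_neg (not_le.mp hneg)])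

lemma IndepFun.measure_prodMk_mem {Ω α β : Type*} [MeasurableSpace Ω] [MeasurableSpace α]
    [MeasurableSpace β] {P : Measure Ω} [IsFiniteMeasure P] {X : Ω → α} {Y : Ω → β}
    {μ : Measure α} {ν : Measure β} (hX : Measurable X) (hY : Measurable Y)
    (hXlaw : P.map X = μ) (hYlaw : P.map Y = ν) (hindep : IndepFun X Y P)
    {S : Set (α × β)} (hS : MeasurableSet S) :
    P {ω | (X ω, Y ω) ∈ S} = ∫⁻ x, ν (Prod.mk x ⁻¹' S) ∂μ := by
  subst hXlaw hYlaw
  rw [← Measure.prod_apply hS,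
    ← (indepFun_iff_map_prod_eq_prod_map_map hX.aemeasurable hY.aemeasurable).mp hindep,
    Measure.map_apply (hX.prodMk hY) hS]
  rfl

lemma measure_one_add_inv_le_eq_setLIntegral {Ω : Type*} [MeasurableSpace Ω] {P : Measure Ω}
    [IsFiniteMeasure P] {m n : ℕ} (hm : 0 < m) (hn : 0 < n) {lam mu : ℝ} (hlam : 0 < lam)
    (hmu : 0 < mu) {X Y : Ω → ℝ}
    (hX : Measurable X) (hY : Measurable Y) (hXlaw : P.map X = gammaMeasure m lam)
    (hYlaw : P.map Y = gammaMeasure n mu) (hindep : IndepFun X Y P) :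
    P {ω | 1 + 1 / X ω ≤ Y ω}
      = ∫⁻ x in Ioi 0, ENNReal.ofReal (gammaPDFReal m lam x * erlangSurvival n mu (1 + 1 / x)) := by
  have hS : MeasurableSet {p : ℝ × ℝ | 1 + 1 / p.1 ≤ p.2} :=
    measurableSet_le (by fun_prop) measurable_snd
  have := isProbabilityMeasure_gammaMeasure (a := n) (by positivity) hmu
  refine (IndepFun.measure_prodMk_mem hX hY hXlaw hYlaw hindep hS).trans ?_
  rw [lintegral_gammaMeasure _ _ (measurable_measure_prodMk_left hS)]
  refine setLIntegral_congr_fun measurableSet_Ioi fun x (hx : 0 < x) => ?_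
  rw [gammaPDF, ENNReal.ofReal_mul (gammaPDFReal_nonneg (by positivity) hlam x),
    ← gammaMeasure_natCast_Ici hn hmu (by positivity)]
  rfl

lemma exp_neg_mul_pow_div_factorial_le_one {y : ℝ} (hy : 0 ≤ y) (k : ℕ) :
    exp (-y) * (y ^ k / k !) ≤ 1 := by
  rw [exp_neg, inv_mul_le_iff₀ (exp_pos y), mul_one]
  exact pow_div_factorial_le_exp y hy k

lemma integrableOn_gammaPDFReal_mul_poissonTerm {a r mu : ℝ} (ha : 0 < a) (hr : 0 < r)
    (hmu : 0 ≤ mu) (k : ℕ) :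
    IntegrableOn (fun x => gammaPDFReal a r x *
      (exp (-(mu * (1 + 1 / x))) * ((mu * (1 + 1 / x)) ^ k / k !))) (Ioi 0) := by
  refine (integrable_gammaPDFReal ha hr).integrableOn.mul_bdd (c := 1) (by fun_prop) ?_
  refine (ae_restrict_iff' measurableSet_Ioi).mpr (ae_of_all _ fun x (hx : 0 < x) => ?_)
  have hy : 0 ≤ mu * (1 + 1 / x) := by positivity
  rw [Real.norm_of_nonneg (by positivity)]
  exact exp_neg_mul_pow_div_factorial_le_one hy k

lemma gammaPDFReal_mul_poissonTerm_one_add_inv {m : ℕ} (hm : 0 < m) (lam mu : ℝ) {x : ℝ}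
    (hx : 0 < x) (k : ℕ) :
    gammaPDFReal m lam x * (exp (-(mu * (1 + 1 / x))) * ((mu * (1 + 1 / x)) ^ k / k !))
      = mu ^ k * exp (-mu) / k ! *
        ((1 + 1 / x) ^ k * (lam ^ m * x ^ (m - 1) / Gamma m) * exp (-mu / x - lam * x)) := by
  have hsplit : exp (-(mu * (1 + 1 / x))) * exp (-(lam * x))
      = exp (-mu) * exp (-mu / x - lam * x) := by
    rw [← exp_add, ← exp_add]
    ring_nf
  rw [gammaPDFReal_natCast hm lam hx.le, mul_pow]
  linear_combination (mu ^ k * (1 + 1 / x) ^ k / k ! * (lam ^ m * x ^ (m - 1) / Gamma m)) * hsplit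

lemma gammaPDFReal_mul_erlangSurvival_one_add_inv (a r mu : ℝ) (n : ℕ) :
    (fun x => gammaPDFReal a r x * erlangSurvival n mu (1 + 1 / x))
      = fun x => ∑ k ∈ Finset.range n, gammaPDFReal a r x *
          (exp (-(mu * (1 + 1 / x))) * ((mu * (1 + 1 / x)) ^ k / k !)) := by
  ext x
  simp only [erlangSurvival, Finset.mul_sum]

lemma integrableOn_gammaPDFReal_mul_erlangSurvival_one_add_inv {a r mu : ℝ} (ha : 0 < a)
    (hr : 0 < r) (hmu : 0 ≤ mu) (n : ℕ) :
    IntegrableOn (fun x => gammaPDFReal a r x * erlangSurvival n mu (1 + 1 / x)) (Ioi 0) := by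
  rw [gammaPDFReal_mul_erlangSurvival_one_add_inv]
  exact integrable_finsetSum _ fun k _ => integrableOn_gammaPDFReal_mul_poissonTerm ha hr hmu k

lemma integral_gammaPDFReal_mul_erlangSurvival_one_add_inv {m : ℕ} (hm : 0 < m) (n : ℕ)
    {lam mu : ℝ} (hlam : 0 < lam) (hmu : 0 ≤ mu) :
    ∫ x in Ioi 0, gammaPDFReal m lam x * erlangSurvival n mu (1 + 1 / x)
      = ∑ k ∈ Finset.range n, mu ^ k * exp (-mu) / k ! *
        ∫ t in Ioi 0, (1 + 1 / t) ^ k * (lam ^ m * t ^ (m - 1) / Gamma m) *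
          exp (-mu / t - lam * t) := by
  rw [gammaPDFReal_mul_erlangSurvival_one_add_inv, integral_finsetSum _ fun k _ =>
    integrableOn_gammaPDFReal_mul_poissonTerm (by positivity) hlam hmu k]
  refine Finset.sum_congr rfl fun k _ => ?_
  rw [← integral_const_mul]
  exact setIntegral_congr_fun measurableSet_Ioi fun x hx =>
    gammaPDFReal_mul_poissonTerm_one_add_inv hm lam mu hx k

end ProbabilityTheory

theorem stmt_8 {Ω : Type*} [MeasurableSpace Ω] (P : Measure Ω) [IsProbabilityMeasure P]
    (m n : ℕ) (hm : 0 < m) (hn : 0 < n) (lam mu : ℝ) (hlam : 0 < lam) (hmu : 0 < mu)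
    (X Y : Ω → ℝ) (hX : Measurable X) (hY : Measurable Y)
    (hXlaw : P.map X = gammaMeasure m lam) (hYlaw : P.map Y = gammaMeasure n mu)
    (hindep : IndepFun X Y P) :
    P {ω | Y ω < 1 + 1 / X ω}
      = ENNReal.ofReal
          (1 - ∑ k ∈ Finset.range n, (mu ^ k * Real.exp (-mu) / (Nat.factorial k)) *
            ∫ t in Set.Ioi (0 : ℝ),
              (1 + 1 / t) ^ k * (lam ^ m * t ^ (m - 1) / Real.Gamma m) *
                Real.exp (-mu / t - lam * t)) := by
  have hnonneg : ∀ x ∈ Ioi (0 : ℝ), 0 ≤ gammaPDFReal m lam x * erlangSurvival n mu (1 + 1 / x) :=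
    fun x (hx : 0 < x) => mul_nonneg (gammaPDFReal_nonneg (by positivity) hlam x)
      (erlangSurvival_nonneg hmu.le (by positivity))
  have hcompl : {ω | Y ω < 1 + 1 / X ω} = {ω | 1 + 1 / X ω ≤ Y ω}ᶜ := by
    ext ω
    simp
  rw [hcompl, prob_compl_eq_one_sub (measurableSet_le (by fun_prop) hY),
    measure_one_add_inv_le_eq_setLIntegral hm hn hlam hmu hX hY hXlaw hYlaw hindep,
    ← ofReal_integral_eq_lintegral_ofReal
      (integrableOn_gammaPDFReal_mul_erlangSurvival_one_add_inv (by positivity) hlam hmu.le n)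
      ((ae_restrict_iff' measurableSet_Ioi).mpr (ae_of_all _ hnonneg)),
    ← integral_gammaPDFReal_mul_erlangSurvival_one_add_inv hm n hlam hmu.le,
    ← ENNReal.ofReal_one, ENNReal.ofReal_sub _ (setIntegral_nonneg measurableSet_Ioi hnonneg)]
end

section
/- Let X and Y be independent random variables with Gamma distributions of shape m, rate λ and shape n, rate μ respectively (m, n positive integers, λ, μ > 0), and define Z = max{0, (X(Y−1)−1)/(2(Y + X + 1))}. Then for every t ≥ 0, Pr(Z ≤ t) = F_X(2t) + ∫_{2t}^∞ F_Y((2t+1)(1+x)/(x−2t)) f_X(x) dx, where F_X, F_Y are the cumulative distribution functions and f_X is the density of X. -/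
open MeasureTheory ProbabilityTheory

/-!
For positive `x, y` the event `Z ≤ t` is `x ≤ 2t` or `2t < x ∧ y ≤ (2t+1)(1+x)/(x-2t)`, a disjoint
union; gamma variables are almost surely positive, so this describes `{Z ≤ t}` up to a null set.
By independence the law of `(X, Y)` is a product, and Fubini turns the probability of the second
event into the integral of the distribution function of `Y` against the density of `X`.
-/

lemma gammaMeasure_Iic_zero (a r : ℝ) : gammaMeasure a r (Set.Iic 0) = 0 := by
  rw [gammaMeasure, withDensity_apply _ measurableSet_Iic, ← setLIntegral_congr Iio_ae_eq_Iic]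
  exact lintegral_gammaPDF_of_nonpos le_rfl

lemma ae_pos_gammaMeasure (a r : ℝ) : ∀ᵐ x ∂gammaMeasure a r, 0 < x := by
  simpa [ae_iff, Set.Iic] using gammaMeasure_Iic_zero a r

/-- The paper's `Γ̃_D*` with `x = Γ_S` and `y = Γ_D`. -/
noncomputable def optimalSINR (x y : ℝ) : ℝ := max 0 ((x * (y - 1) - 1) / (2 * (y + x + 1)))

lemma optimalSINR_le_iff {t x y : ℝ} (ht : 0 ≤ t) (hx : 0 < x) (hy : 0 < y) :
    optimalSINR x y ≤ t ↔
      x ≤ 2 * t ∨ (2 * t < x ∧ y ≤ (2 * t + 1) * (1 + x) / (x - 2 * t)) := by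
  rw [optimalSINR, max_le_iff, and_iff_right ht, div_le_iff₀ (by linarith)]
  rcases le_or_gt x (2 * t) with hle | hlt
  · simp only [hle, true_or, iff_true]
    nlinarith [mul_nonneg hy.le (sub_nonneg.mpr hle)]
  · simp only [hlt.not_ge, hlt, true_and, false_or, le_div_iff₀ (sub_pos.mpr hlt)]
    constructor <;> intro h <;> nlinarith

lemma ProbabilityTheory.IndepFun.lintegral_measure_mem_and_le_comp {Ω : Type*} [MeasurableSpace Ω]
    {P : Measure Ω} [IsFiniteMeasure P] {X Y : Ω → ℝ} (hX : Measurable X) (hY : Measurable Y)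
    (hXY : IndepFun X Y P) {s : Set ℝ} (hs : MeasurableSet s) {g : ℝ → ℝ} (hg : Measurable g) :
    P {ω | X ω ∈ s ∧ Y ω ≤ g (X ω)} = ∫⁻ x in s, P {ω | Y ω ≤ g x} ∂(P.map X) := by
  set S : Set (ℝ × ℝ) := {p | p.1 ∈ s ∧ p.2 ≤ g p.1}
  have hS : MeasurableSet S :=
    (measurable_fst hs).inter (measurableSet_le measurable_snd (hg.comp measurable_fst))
  have hslice (x : ℝ) :
      P.map Y (Prod.mk x ⁻¹' S) = s.indicator (fun x ↦ P {ω | Y ω ≤ g x}) x := by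
    by_cases hx : x ∈ s
    · have hIic : Prod.mk x ⁻¹' S = Set.Iic (g x) := by ext; simp [S, hx]
      rw [hIic, Set.indicator_of_mem hx, Measure.map_apply hY measurableSet_Iic]
      rfl
    · simp [S, hx]
  rw [show {ω | X ω ∈ s ∧ Y ω ≤ g (X ω)} = (fun ω ↦ (X ω, Y ω)) ⁻¹' S from rfl,
    ← Measure.map_apply (hX.prodMk hY) hS,
    (indepFun_iff_map_prod_eq_prod_map_map hX.aemeasurable hY.aemeasurable).mp hXY,
    Measure.prod_apply hS]
  simp_rw [hslice]
  exact lintegral_indicator hs _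

lemma ProbabilityTheory.IndepFun.toReal_measure_mem_and_le_comp {Ω : Type*} [MeasurableSpace Ω]
    {P : Measure Ω} [IsFiniteMeasure P] {X Y : Ω → ℝ} (hX : Measurable X) (hY : Measurable Y)
    (hXY : IndepFun X Y P) {s : Set ℝ} (hs : MeasurableSet s) {g : ℝ → ℝ} (hg : Measurable g) :
    (P {ω | X ω ∈ s ∧ Y ω ≤ g (X ω)}).toReal
      = ∫ x in s, (P {ω | Y ω ≤ g x}).toReal ∂(P.map X) := by
  have hmono : Monotone fun c ↦ P {ω | Y ω ≤ c} :=
    fun _ _ hcd ↦ measure_mono fun _ hω ↦ le_trans hω hcd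
  have hF : Measurable fun x ↦ P {ω | Y ω ≤ g x} := hmono.measurable.comp hg
  rw [hXY.lintegral_measure_mem_and_le_comp hX hY hs hg,
    ← integral_toReal hF.aemeasurable (.of_forall fun _ ↦ measure_lt_top _ _)]

theorem stmt_10_general {Ω : Type*} [MeasurableSpace Ω] (P : Measure Ω) [IsProbabilityMeasure P]
    (m n : ℕ) (hm : 0 < m) (lam mu : ℝ) (hlam : 0 < lam)
    (X Y : Ω → ℝ) (hX : Measurable X) (hY : Measurable Y)
    (hXlaw : P.map X = gammaMeasure m lam) (hYlaw : P.map Y = gammaMeasure n mu)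
    (hindep : IndepFun X Y P)
    (Z : Ω → ℝ) (hZ : Z = fun ω => max 0 ((X ω * (Y ω - 1) - 1) / (2 * (Y ω + X ω + 1))))
    (t : ℝ) (ht : 0 ≤ t) :
    (P {ω | Z ω ≤ t}).toReal
      = (P {ω | X ω ≤ 2 * t}).toReal
        + ∫ x in Set.Ioi (2 * t),
            (P {ω | Y ω ≤ (2 * t + 1) * (1 + x) / (x - 2 * t)}).toReal
              * gammaPDFReal m lam x := by
  set g : ℝ → ℝ := fun x ↦ (2 * t + 1) * (1 + x) / (x - 2 * t)
  have hg : Measurable g := by fun_prop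
  have hXpos : ∀ᵐ ω ∂P, 0 < X ω :=
    ae_of_ae_map hX.aemeasurable (hXlaw ▸ ae_pos_gammaMeasure _ _)
  have hYpos : ∀ᵐ ω ∂P, 0 < Y ω :=
    ae_of_ae_map hY.aemeasurable (hYlaw ▸ ae_pos_gammaMeasure _ _)
  set A : Set Ω := {ω | X ω ≤ 2 * t}
  set B : Set Ω := {ω | X ω ∈ Set.Ioi (2 * t) ∧ Y ω ≤ g (X ω)}
  have hZAB : {ω | Z ω ≤ t} =ᵐ[P] (A ∪ B : Set Ω) := by
    filter_upwards [hXpos, hYpos] with ω hXω hYω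
    exact propext (hZ ▸ optimalSINR_le_iff ht hXω hYω)
  have hAB : Disjoint A B := Set.disjoint_left.mpr fun ω (hA : X ω ≤ 2 * t) hB ↦ hB.1.not_ge hA
  have hB : MeasurableSet B :=
    (hX measurableSet_Ioi).inter (measurableSet_le hY (hg.comp hX))
  rw [measure_congr hZAB, measure_union hAB hB,
    ENNReal.toReal_add (measure_ne_top _ _) (measure_ne_top _ _),
    hindep.toReal_measure_mem_and_le_comp hX hY measurableSet_Ioi hg, hXlaw, gammaMeasure,
    setIntegral_withDensity_eq_setIntegral_toReal_smul
      (f := gammaPDF m lam) (measurable_gammaPDFReal _ _).ennreal_ofReal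
      (.of_forall fun _ ↦ ENNReal.ofReal_lt_top) _ measurableSet_Ioi]
  congr 2 with x
  rw [gammaPDF, ENNReal.toReal_ofReal (gammaPDFReal_nonneg (Nat.cast_pos.mpr hm) hlam x),
    smul_eq_mul, mul_comm]

theorem stmt_10 {Ω : Type*} [MeasurableSpace Ω] (P : Measure Ω) [IsProbabilityMeasure P]
    (m n : ℕ) (hm : 0 < m) (hn : 0 < n) (lam mu : ℝ) (hlam : 0 < lam) (hmu : 0 < mu)
    (X Y : Ω → ℝ) (hX : Measurable X) (hY : Measurable Y)
    (hXlaw : P.map X = gammaMeasure m lam) (hYlaw : P.map Y = gammaMeasure n mu)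
    (hindep : IndepFun X Y P)
    (Z : Ω → ℝ) (hZ : Z = fun ω => max 0 ((X ω * (Y ω - 1) - 1) / (2 * (Y ω + X ω + 1))))
    (t : ℝ) (ht : 0 ≤ t) :
    (P {ω | Z ω ≤ t}).toReal
      = (P {ω | X ω ≤ 2 * t}).toReal
        + ∫ x in Set.Ioi (2 * t),
            (P {ω | Y ω ≤ (2 * t + 1) * (1 + x) / (x - 2 * t)}).toReal
              * gammaPDFReal m lam x :=
  stmt_10_general P m n hm lam mu hlam X Y hX hY hXlaw hYlaw hindep Z hZ t ht
end

section
/- The optimal destination SINR Γ̃_D* is unbounded: for every M > 0 there exist Γ_S > 0 and Γ_D > 1 + 1/Γ_S such that (Γ_S(Γ_D − 1) − 1)/(2(Γ_D + Γ_S + 1)) > M. In contrast, the optimal UAV SINR Γ̃_U* = (Γ_S(Γ_D−1)−1)/((Γ_S+2)Γ_D + Γ_S + 1) is bounded above by 1 for all such Γ_S, Γ_D. -/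
theorem stmt_18 :
    (∀ M : ℝ, 0 < M → ∃ S D : ℝ, 0 < S ∧ 1 + 1 / S < D ∧
      M < (S * (D - 1) - 1) / (2 * (D + S + 1))) ∧
    (∀ S D : ℝ, 0 < S → 1 + 1 / S < D →
      (S * (D - 1) - 1) / ((S + 2) * D + S + 1) ≤ 1) := by
  constructor
  · intro M hM
    set S : ℝ := 10 * M + 10 with hS
    refine ⟨S, S, by positivity, ?_, ?_⟩
    · have hSpos : (0:ℝ) < S := by positivity
      have h1 : 1 / S ≤ 1 := by rw [div_le_one hSpos]; nlinarith
      nlinarith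
    · rw [lt_div_iff₀ (by positivity)]
      nlinarith [sq_nonneg M, sq_nonneg (M - 1), mul_pos hM hM]
  · intro S D hS hD
    have hDpos : 0 < D := lt_trans (by positivity) hD
    rw [div_le_one (by nlinarith)]
    nlinarith
end
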